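/- Let f ∈ ℂ[X₀,X₁] be homogeneous of degree d ≥ 3 and squarefree, let F = Y^d − f(X₀,X₁) ∈ ℂ[Y,X₀,X₁], let ζ ∈ ℂ be a primitive d-th root of unity, and let σ be the ℂ-algebra automorphism of ℂ[Y,X₀,X₁] with σ(Y) = ζ·Y, σ(X₀) = X₀, σ(X₁) = X₁. Then σ(J_F) = J_F, so σ induces a ℂ-linear automorphism σ̄ of R_F^{2d−3}, and the ζ-eigenspace of σ̄ on R_F^{2d−3} is one-dimensional; it is spanned by the class of Y·h for any h ∈ S^{2d−4} with h ∉ J_f. -/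

import Mathlib

/-!
Regard `ℂ[Y,X₀,X₁]` as `S[Y]`. Since `d ≠ 0`,
`J_F = (Y^{d-1}, f₀, f₁)` with `fᵢ = ∂f/∂Xᵢ`, so a polynomial lies in `J_F` exactly when its
coefficients of `Y^k`, `k < d - 1`, lie in `J_f`, and `σ` multiplies the coefficient of `Y^k`
by `ζ^k`. For a `ζ`-eigenvector modulo `J_F` all these coefficients except that of `Y` are
therefore in `J_f`, and everything reduces to `S^{2d-4} = (J_f)_{2d-4} ⊕ ℂ h`.
Euler's identity and squarefreeness make `f₀, f₁` coprime forms of degree `d - 1`, so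
`(u, v, c) ↦ u f₀ + v f₁ + c h` is injective on `S^{d-3} × S^{d-3} × ℂ`, a space of dimension
`2d - 3 = dim S^{2d-4}`.
-/

open MvPolynomial

/-- The Jacobian ideal of a binary form `f ∈ ℂ[X₀,X₁] = S`: the ideal generated by the two
partial derivatives of `f`. -/
noncomputable def jacIdealS (f : MvPolynomial (Fin 2) ℂ) : Ideal (MvPolynomial (Fin 2) ℂ) :=
  Ideal.span {pderiv 0 f, pderiv 1 f}

/-- The inclusion `S = ℂ[X₀,X₁] → T = ℂ[Y,X₀,X₁]`, where the variable `Y` of `T` is indexed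
by `0` and `X₀, X₁` by `1, 2`. -/
noncomputable def embS : MvPolynomial (Fin 2) ℂ →ₐ[ℂ] MvPolynomial (Fin 3) ℂ :=
  rename Fin.succ

/-- `F = Y^d − f(X₀,X₁) ∈ T = ℂ[Y,X₀,X₁]`. -/
noncomputable def bigF (d : ℕ) (f : MvPolynomial (Fin 2) ℂ) : MvPolynomial (Fin 3) ℂ :=
  X 0 ^ d - embS f

/-- The Jacobian ideal `J_F ⊆ T` of `F = Y^d − f`: the ideal generated by the three partial
derivatives `∂F/∂Y = d·Y^{d−1}`, `∂F/∂X₀ = −∂f/∂X₀`, `∂F/∂X₁ = −∂f/∂X₁`. -/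
noncomputable def jacIdealT (d : ℕ) (f : MvPolynomial (Fin 2) ℂ) :
    Ideal (MvPolynomial (Fin 3) ℂ) :=
  Ideal.span {pderiv 0 (bigF d f), pderiv 1 (bigF d f), pderiv 2 (bigF d f)}

/-- The `ℂ`-algebra automorphism `σ` of `T = ℂ[Y,X₀,X₁]` with `σ(Y) = ζ·Y`, `σ(X₀) = X₀`,
`σ(X₁) = X₁`. -/
noncomputable def sigmaAut (ζ : ℂ) : MvPolynomial (Fin 3) ℂ →ₐ[ℂ] MvPolynomial (Fin 3) ℂ :=
  aeval fun i => if i = 0 then ζ • X 0 else X i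

namespace Ideal

theorem span_insert_smul {K A : Type*} [Field K] [CommRing A] [Algebra K A] {c : K} (hc : c ≠ 0)
    (x : A) (s : Set A) : span (insert (c • x) s) = span (insert x s) := by
  rw [span_insert, span_insert, Algebra.smul_def,
    span_singleton_mul_left_unit (hc.isUnit.map (algebraMap K A))]

end Ideal

namespace Polynomial

theorem mem_span_X_pow_sup_map_C_iff {R : Type*} [CommRing R] {n : ℕ} {I : Ideal R} {Q : R[X]} :
    Q ∈ Ideal.span {X ^ n} ⊔ I.map C ↔ ∀ k < n, Q.coeff k ∈ I := by
  constructor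
  · intro hQ k hk
    obtain ⟨A, hA, B, hB, rfl⟩ := Submodule.mem_sup.1 hQ
    rw [coeff_add, X_pow_dvd_iff.1 (Ideal.mem_span_singleton.1 hA) k hk, zero_add]
    exact Ideal.mem_map_C_iff.1 hB k
  · intro hQ
    set B := ∑ k ∈ Finset.range n, monomial k (Q.coeff k)
    have coeff_B (j : ℕ) : B.coeff j = if j < n then Q.coeff j else 0 := by
      simp [B, coeff_monomial]
    have hB : B ∈ I.map C := Ideal.mem_map_C_iff.2 fun j => by
      rw [coeff_B]
      split_ifs with hj
      exacts [hQ j hj, I.zero_mem]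
    have hA : X ^ n ∣ Q - B := X_pow_dvd_iff.2 fun j hj => by
      rw [coeff_sub, coeff_B, if_pos hj, sub_self]
    exact Submodule.mem_sup.2 ⟨Q - B, Ideal.mem_span_singleton.2 hA, B, hB, sub_add_cancel _ _⟩

end Polynomial

namespace MvPolynomial

variable {σ R K : Type*}

theorem totalDegree_pderiv_lt [CommSemiring R] {p : MvPolynomial σ R} {i : σ}
    (h : pderiv i p ≠ 0) : (pderiv i p).totalDegree < p.totalDegree := by
  obtain ⟨m, hm, hdeg⟩ := Finset.exists_mem_eq_sup _ (support_nonempty.2 h)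
    fun m : σ →₀ ℕ => m.sum fun _ e => e
  have hcoeff : coeff (m + Finsupp.single i 1) p ≠ 0 := by
    intro h0
    rw [mem_support_iff, coeff_pderiv, h0, zero_mul] at hm
    exact hm rfl
  have hle := le_totalDegree (mem_support_iff.2 hcoeff)
  rw [Finsupp.sum_add_index' (fun _ => rfl) fun _ _ _ => rfl, Finsupp.sum_single_index rfl] at hle
  rw [totalDegree, hdeg]
  omega

theorem eq_C_of_forall_pderiv_eq_zero [CommSemiring R] [NoZeroDivisors R] [CharZero R]
    {p : MvPolynomial σ R} (h : ∀ i, pderiv i p = 0) : p = C (coeff 0 p) := by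
  classical
  ext m
  rw [coeff_C]
  split_ifs with hm
  · rw [hm]
  obtain ⟨i, hi⟩ := Finsupp.ne_iff.1 (Ne.symm hm)
  have hmi : Finsupp.single i 1 ≤ m := Finsupp.single_le_iff.2 (Nat.one_le_iff_ne_zero.2 hi)
  have hcoeff := coeff_pderiv (i := i) p (m - Finsupp.single i 1)
  rw [h i, coeff_zero, tsub_add_cancel_of_le hmi] at hcoeff
  exact (mul_eq_zero.1 hcoeff.symm).resolve_right (Nat.cast_add_one_ne_zero _)

theorem IsHomogeneous.eq_zero_of_dvd [CommRing R] [IsDomain R] {u b : MvPolynomial σ R}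
    {k m : ℕ} (hu : u.IsHomogeneous k) (hb : b.IsHomogeneous m) (hkm : k < m) (hdvd : b ∣ u) :
    u = 0 := by
  by_contra hu0
  have hb0 : b ≠ 0 := by rintro rfl; exact hu0 (zero_dvd_iff.1 hdvd)
  have hle := totalDegree_le_of_dvd_of_isDomain hdvd hu0
  rw [hb.totalDegree hb0] at hle
  exact absurd (hle.trans hu.totalDegree_le) hkm.not_ge

instance [Finite σ] [CommSemiring R] (n : ℕ) : Module.Finite R (homogeneousSubmodule σ R n) :=
  Module.Finite.iff_fg.2 (homogeneousSubmodule_fg σ R n)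

section Field

variable [Field K]

theorem finrank_homogeneousSubmodule_fin_two (n : ℕ) :
    Module.finrank K (homogeneousSubmodule (Fin 2) K n) = n + 1 := by
  classical
  have hs : {d : Fin 2 →₀ ℕ | d.degree = n} =
      ↑((Finset.univ : Finset (Fin 2)).finsuppAntidiag n) := by
    ext d
    simp [Finset.mem_finsuppAntidiag, Finsupp.degree_eq_sum]
  rw [homogeneousSubmodule_eq_finsupp_supported,
    (AddMonoidAlgebra.supportedEquivFinsupp _).finrank_eq, hs, Module.finrank_finsupp_self]
  simp [Finset.card_finsuppAntidiag_nat_eq_choose, add_comm 1 n]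

theorem exists_sub_smul_mem_span_of_isRelPrime {a b h p : MvPolynomial (Fin 2) K} {k : ℕ}
    (ha : a.IsHomogeneous (k + 2)) (hb : b.IsHomogeneous (k + 2)) (hab : IsRelPrime a b)
    (hh : h.IsHomogeneous (2 * k + 2)) (hhab : h ∉ Ideal.span {a, b})
    (hp : p.IsHomogeneous (2 * k + 2)) : ∃ c : K, p - c • h ∈ Ideal.span {a, b} := by
  set V := homogeneousSubmodule (Fin 2) K k
  let Φ : V × V × K →ₗ[K] MvPolynomial (Fin 2) K :=
    (LinearMap.mulRight K a ∘ₗ V.subtype).coprod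
      ((LinearMap.mulRight K b ∘ₗ V.subtype).coprod (LinearMap.toSpanSingleton K _ h))
  have hΦ (u v : V) (c : K) : Φ (u, v, c) = u * a + v * b + c • h := by
    simp [Φ, add_assoc]
  have hrange : LinearMap.range Φ ≤ homogeneousSubmodule (Fin 2) K (2 * k + 2) := by
    rintro _ ⟨⟨u, v, c⟩, rfl⟩
    rw [hΦ, mem_homogeneousSubmodule, smul_eq_C_mul]
    refine IsHomogeneous.add ?_ (hh.C_mul c)
    rw [show 2 * k + 2 = k + (k + 2) by ring]
    exact (u.2.mul ha).add (v.2.mul hb)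
  have hinj : Function.Injective Φ := by
    rw [← LinearMap.ker_eq_bot, LinearMap.ker_eq_bot']
    rintro ⟨u, v, c⟩ hx
    rw [hΦ, smul_eq_C_mul] at hx
    have hc : c = 0 := by
      by_contra hc
      have hcc : C c⁻¹ * C c = (1 : MvPolynomial (Fin 2) K) := by
        rw [← C_mul, inv_mul_cancel₀ hc, C_1]
      exact hhab (Ideal.mem_span_pair.2
        ⟨-C c⁻¹ * (u : MvPolynomial (Fin 2) K), -C c⁻¹ * (v : MvPolynomial (Fin 2) K),
          by linear_combination (-C c⁻¹) * hx + h * hcc⟩)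
    rw [hc, C_0, zero_mul, add_zero] at hx
    have hu : (u : MvPolynomial (Fin 2) K) = 0 := u.2.eq_zero_of_dvd hb (by omega)
      (hab.symm.dvd_of_dvd_mul_right ⟨-v, by linear_combination hx⟩)
    have hv : (v : MvPolynomial (Fin 2) K) = 0 := v.2.eq_zero_of_dvd ha (by omega)
      (hab.dvd_of_dvd_mul_right ⟨-u, by linear_combination hx⟩)
    exact Prod.ext (Subtype.ext hu) (Prod.ext (Subtype.ext hv) hc)
  have hfinrank : Module.finrank K (LinearMap.range Φ) =
      Module.finrank K (homogeneousSubmodule (Fin 2) K (2 * k + 2)) := by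
    rw [LinearMap.finrank_range_of_inj hinj, Module.finrank_prod, Module.finrank_prod,
      finrank_homogeneousSubmodule_fin_two, finrank_homogeneousSubmodule_fin_two,
      Module.finrank_self]
    ring
  obtain ⟨⟨u, v, c⟩, hx⟩ : p ∈ LinearMap.range Φ :=
    Submodule.eq_of_le_of_finrank_eq hrange hfinrank ▸ hp
  rw [hΦ] at hx
  exact ⟨c, Ideal.mem_span_pair.2 ⟨u, v, by linear_combination hx⟩⟩

variable [CharZero K] {n : ℕ}

theorem IsHomogeneous.dvd_of_forall_dvd_pderiv [Fintype σ] {f q : MvPolynomial σ K}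
    (hf : f.IsHomogeneous n) (hn : n ≠ 0) (h : ∀ i, q ∣ pderiv i f) : q ∣ f := by
  have hq : q ∣ C (n : K) * f := by
    rw [← smul_eq_C_mul, Nat.cast_smul_eq_nsmul, ← hf.sum_X_mul_pderiv]
    exact Finset.dvd_sum fun i _ => (h i).mul_left _
  exact (((Nat.cast_ne_zero.2 hn).isUnit).map C).dvd_mul_left.1 hq

/-- By Euler's identity `q ∣ f = q g` with `q ∤ g`; then `q` divides `∂q · g = ∂f - q ∂g`, hence
`∂q`, so every `∂q` vanishes for degree reasons and `q` is constant. -/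
theorem IsHomogeneous.not_forall_dvd_pderiv_of_prime [Fintype σ] {f q : MvPolynomial σ K}
    (hf : f.IsHomogeneous n) (hn : n ≠ 0) (hsf : Squarefree f) (hq : Prime q) :
    ¬ ∀ i, q ∣ pderiv i f := by
  intro h
  obtain ⟨g, rfl⟩ := hf.dvd_of_forall_dvd_pderiv hn h
  have hqg : ¬ q ∣ g := fun ⟨g', hg'⟩ => hq.not_isUnit (hsf q ⟨g', by rw [hg', mul_assoc]⟩)
  have hq_dvd_pderiv (i : σ) : q ∣ pderiv i q := by
    have hi := h i
    rw [pderiv_mul] at hi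
    exact (hq.dvd_or_dvd ((dvd_add_left (dvd_mul_right q _)).1 hi)).resolve_right hqg
  have hpderiv_eq_zero (i : σ) : pderiv i q = 0 := by
    by_contra hne
    exact (totalDegree_pderiv_lt hne).not_ge
      (totalDegree_le_of_dvd_of_isDomain (hq_dvd_pderiv i) hne)
  have hq_eq := eq_C_of_forall_pderiv_eq_zero hpderiv_eq_zero
  have hc : coeff 0 q ≠ 0 := fun h0 => hq.ne_zero (by rw [hq_eq, h0, C_0])
  exact hq.not_isUnit (hq_eq ▸ hc.isUnit.map C)

theorem IsHomogeneous.isRelPrime_pderiv {f : MvPolynomial (Fin 2) K} (hf : f.IsHomogeneous n)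
    (hn : n ≠ 0) (hsf : Squarefree f) : IsRelPrime (pderiv 0 f) (pderiv 1 f) := by
  refine WfDvdMonoid.isRelPrime_of_no_irreducible_factors ?_ fun q hq h0 h1 =>
    hf.not_forall_dvd_pderiv_of_prime hn hsf hq.prime (Fin.forall_fin_two.2 ⟨h0, h1⟩)
  rintro ⟨h0, h1⟩
  refine not_squarefree_zero (zero_dvd_iff.1 (hf.dvd_of_forall_dvd_pderiv hn ?_) ▸ hsf)
  exact Fin.forall_fin_two.2 ⟨h0 ▸ dvd_refl _, h1 ▸ dvd_refl _⟩

end Field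

end MvPolynomial

theorem finSuccEquiv_embS (q : MvPolynomial (Fin 2) ℂ) :
    finSuccEquiv ℂ 2 (embS q) = Polynomial.C q := by
  induction q using MvPolynomial.induction_on with
  | C a => simp [embS, finSuccEquiv_apply]
  | add p q hp hq => simp [hp, hq]
  | mul_X p i hp => simp_all [embS, finSuccEquiv_X_succ]

theorem pderiv_zero_embS (q : MvPolynomial (Fin 2) ℂ) : pderiv 0 (embS q) = 0 := by
  induction q using MvPolynomial.induction_on with
  | C a => simp [embS]
  | add p q hp hq => simp [hp, hq]
  | mul_X p i hp => simp_all [embS, Fin.succ_ne_zero]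

theorem sigmaAut_X_zero (ζ : ℂ) : sigmaAut ζ (X 0) = ζ • X 0 := by
  simp [sigmaAut]

theorem sigmaAut_X_succ (ζ : ℂ) (i : Fin 2) : sigmaAut ζ (X i.succ) = X i.succ := by
  simp [sigmaAut, Fin.succ_ne_zero]

theorem sigmaAut_embS (ζ : ℂ) (q : MvPolynomial (Fin 2) ℂ) : sigmaAut ζ (embS q) = embS q := by
  induction q using MvPolynomial.induction_on with
  | C a => simp [embS]
  | add p q hp hq => simp [hp, hq]
  | mul_X p i hp => simp_all [embS, sigmaAut_X_succ]

theorem sigmaAut_X_zero_mul_embS (ζ : ℂ) (q : MvPolynomial (Fin 2) ℂ) :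
    sigmaAut ζ (X 0 * embS q) = ζ • (X 0 * embS q) := by
  rw [map_mul, sigmaAut_X_zero, sigmaAut_embS, smul_mul_assoc]

theorem finSuccEquiv_sigmaAut (ζ : ℂ) (P : MvPolynomial (Fin 3) ℂ) :
    finSuccEquiv ℂ 2 (sigmaAut ζ P) =
      (finSuccEquiv ℂ 2 P).comp (Polynomial.C (C ζ) * Polynomial.X) := by
  have hX (i : Fin 3) : finSuccEquiv ℂ 2 (sigmaAut ζ (X i)) =
      (finSuccEquiv ℂ 2 (X i)).comp (Polynomial.C (C ζ) * Polynomial.X) := by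
    cases i using Fin.cases with
    | zero =>
      rw [sigmaAut_X_zero, map_smul, finSuccEquiv_X_zero, Polynomial.X_comp, Algebra.smul_def]
      rfl
    | succ j => rw [sigmaAut_X_succ, finSuccEquiv_X_succ, Polynomial.C_comp]
  induction P using MvPolynomial.induction_on with
  | C a => simp [finSuccEquiv_apply]
  | add p q hp hq => simp [hp, hq, Polynomial.add_comp]
  | mul_X p i hp => rw [map_mul, map_mul, map_mul, hp, hX, Polynomial.mul_comp]

theorem coeff_finSuccEquiv_sigmaAut (ζ : ℂ) (P : MvPolynomial (Fin 3) ℂ) (k : ℕ) :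
    (finSuccEquiv ℂ 2 (sigmaAut ζ P)).coeff k = ζ ^ k • (finSuccEquiv ℂ 2 P).coeff k := by
  rw [finSuccEquiv_sigmaAut, Polynomial.comp_C_mul_X_coeff, smul_eq_C_mul, ← C_pow, mul_comm]

theorem coeff_finSuccEquiv_X_zero_mul_embS (q : MvPolynomial (Fin 2) ℂ) (k : ℕ) :
    (finSuccEquiv ℂ 2 (X 0 * embS q)).coeff k = if k = 1 then q else 0 := by
  rw [map_mul, finSuccEquiv_X_zero, finSuccEquiv_embS, Polynomial.X_mul_C,
    Polynomial.coeff_C_mul_X]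

theorem pderiv_zero_bigF (d : ℕ) (f : MvPolynomial (Fin 2) ℂ) :
    pderiv 0 (bigF d f) = (d : ℂ) • X 0 ^ (d - 1) := by
  rw [bigF, map_sub, pderiv_zero_embS, sub_zero, pderiv_pow, pderiv_X_self, mul_one,
    Nat.cast_smul_eq_nsmul, nsmul_eq_mul]

theorem pderiv_succ_bigF (d : ℕ) (f : MvPolynomial (Fin 2) ℂ) (i : Fin 2) :
    pderiv i.succ (bigF d f) = -embS (pderiv i f) := by
  simp [bigF, embS, pderiv_rename (Fin.succ_injective 2), Fin.succ_ne_zero]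

theorem jacIdealT_eq_span {d : ℕ} (hd : d ≠ 0) (f : MvPolynomial (Fin 2) ℂ) :
    jacIdealT d f = Ideal.span {X 0 ^ (d - 1), embS (pderiv 0 f), embS (pderiv 1 f)} := by
  have h1 := pderiv_succ_bigF d f 0
  have h2 := pderiv_succ_bigF d f 1
  simp only [Fin.succ_zero_eq_one, Fin.succ_one_eq_two] at h1 h2
  rw [jacIdealT, pderiv_zero_bigF, h1, h2, Ideal.span_insert_smul (Nat.cast_ne_zero.2 hd)]
  simp only [Ideal.span_insert, Ideal.span_singleton_neg]

theorem map_sigmaAut_jacIdealT {ζ : ℂ} (hζ : ζ ≠ 0) {d : ℕ} (hd : d ≠ 0)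
    (f : MvPolynomial (Fin 2) ℂ) : (jacIdealT d f).map (sigmaAut ζ) = jacIdealT d f := by
  rw [jacIdealT_eq_span hd, Ideal.map_span]
  simp only [Set.image_insert_eq, Set.image_singleton, map_pow, sigmaAut_X_zero, sigmaAut_embS,
    smul_pow]
  exact Ideal.span_insert_smul (pow_ne_zero _ hζ) _ _

theorem map_finSuccEquiv_jacIdealT {d : ℕ} (hd : d ≠ 0) (f : MvPolynomial (Fin 2) ℂ) :
    (jacIdealT d f).map (finSuccEquiv ℂ 2) =
      Ideal.span {Polynomial.X ^ (d - 1)} ⊔ (jacIdealS f).map Polynomial.C := by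
  rw [jacIdealT_eq_span hd, Ideal.map_span, jacIdealS, Ideal.map_span, ← Ideal.span_union,
    Set.singleton_union]
  simp [Set.image_insert_eq, finSuccEquiv_embS, finSuccEquiv_X_zero]

theorem mem_jacIdealT_iff {d : ℕ} (hd : d ≠ 0) {f : MvPolynomial (Fin 2) ℂ}
    {P : MvPolynomial (Fin 3) ℂ} :
    P ∈ jacIdealT d f ↔ ∀ k < d - 1, (finSuccEquiv ℂ 2 P).coeff k ∈ jacIdealS f := by
  rw [← Polynomial.mem_span_X_pow_sup_map_C_iff, ← map_finSuccEquiv_jacIdealT hd]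
  exact (Ideal.apply_mem_of_equiv_iff (f := (finSuccEquiv ℂ 2).toRingEquiv)).symm

theorem X_zero_mul_embS_mem_jacIdealT_iff {d : ℕ} (hd : 3 ≤ d) {f h : MvPolynomial (Fin 2) ℂ} :
    X 0 * embS h ∈ jacIdealT d f ↔ h ∈ jacIdealS f := by
  rw [mem_jacIdealT_iff (by omega)]
  refine ⟨fun hmem => ?_, fun hh k _ => ?_⟩
  · simpa only [coeff_finSuccEquiv_X_zero_mul_embS, if_pos] using hmem 1 (by omega)
  · rw [coeff_finSuccEquiv_X_zero_mul_embS]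
    split_ifs
    exacts [hh, zero_mem _]

/-- `σ` scales the coefficient of `Y^k` by `ζ^k`, and `ζ^k ≠ ζ` for `k < d`, `k ≠ 1`. -/
theorem coeff_finSuccEquiv_mem_jacIdealS_of_sigmaAut_sub_smul_mem {d : ℕ} (hd : d ≠ 0) {ζ : ℂ}
    (hζ : IsPrimitiveRoot ζ d) {f : MvPolynomial (Fin 2) ℂ} {P : MvPolynomial (Fin 3) ℂ}
    (hP : sigmaAut ζ P - ζ • P ∈ jacIdealT d f) {k : ℕ} (hk : k < d - 1) (hk1 : k ≠ 1) :
    (finSuccEquiv ℂ 2 P).coeff k ∈ jacIdealS f := by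
  have hne : ζ ^ k - ζ ≠ 0 := sub_ne_zero.2 fun hζk =>
    hk1 (hζ.pow_inj (by omega) (by omega) (hζk.trans (pow_one ζ).symm))
  have hmem := (mem_jacIdealT_iff hd).1 hP k hk
  rw [map_sub, map_smul, Polynomial.coeff_sub, coeff_finSuccEquiv_sigmaAut,
    Polynomial.coeff_smul, ← sub_smul] at hmem
  simpa [inv_smul_smul₀ hne] using (jacIdealS f).smul_of_tower_mem (ζ ^ k - ζ)⁻¹ hmem

/-- Let `f ∈ ℂ[X₀,X₁]` be homogeneous of degree `d ≥ 3` and squarefree,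
`F = Y^d − f(X₀,X₁)`, `ζ` a primitive `d`-th root of unity, and `σ` the algebra automorphism
of `ℂ[Y,X₀,X₁]` with `σ(Y) = ζY`, `σ(Xᵢ) = Xᵢ`.  Then `σ(J_F) = J_F`, so `σ` induces an
automorphism `σ̄` of `R_F^{2d−3}`, whose `ζ`-eigenspace is one-dimensional, spanned by the
class of `Y·h` for any `h ∈ S^{2d−4}` with `h ∉ J_f`: in terms of representatives, for any
such `h` the class of `Y·h` is a nonzero `ζ`-eigenvector, and any homogeneous `P` of degree
`2d−3` whose class is a `ζ`-eigenvector is congruent to a multiple of `Y·h` modulo `J_F`. -/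
theorem stmt14 (d : ℕ) (hd : 3 ≤ d) (f : MvPolynomial (Fin 2) ℂ)
    (hf : f.IsHomogeneous d) (hsf : Squarefree f)
    (ζ : ℂ) (hζ : IsPrimitiveRoot ζ d) :
    Ideal.map (sigmaAut ζ) (jacIdealT d f) = jacIdealT d f ∧
    ∀ h : MvPolynomial (Fin 2) ℂ, h.IsHomogeneous (2 * d - 4) → h ∉ jacIdealS f →
      (X 0 * embS h ∉ jacIdealT d f) ∧
      sigmaAut ζ (X 0 * embS h) - ζ • (X 0 * embS h) ∈ jacIdealT d f ∧
      ∀ P : MvPolynomial (Fin 3) ℂ, P.IsHomogeneous (2 * d - 3) →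
        sigmaAut ζ P - ζ • P ∈ jacIdealT d f →
          ∃ c : ℂ, P - c • (X 0 * embS h) ∈ jacIdealT d f := by
  have hd0 : d ≠ 0 := by omega
  refine ⟨map_sigmaAut_jacIdealT (hζ.ne_zero hd0) hd0 f, fun h hh hhJ => ⟨?_, ?_, ?_⟩⟩
  · rwa [X_zero_mul_embS_mem_jacIdealT_iff hd]
  · rw [sigmaAut_X_zero_mul_embS, sub_self]
    exact zero_mem _
  intro P hP hPσ
  have hpderiv (i : Fin 2) : (pderiv i f).IsHomogeneous (d - 3 + 2) := by
    simpa [show d - 3 + 2 = d - 1 by omega] using hf.pderiv (i := i)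
  obtain ⟨c, hc⟩ := exists_sub_smul_mem_span_of_isRelPrime (hpderiv 0) (hpderiv 1)
    (hf.isRelPrime_pderiv hd0 hsf) (show 2 * d - 4 = 2 * (d - 3) + 2 by omega ▸ hh) hhJ
    (hP.finSuccEquiv_coeff_isHomogeneous 1 _ (by omega))
  refine ⟨c, (mem_jacIdealT_iff hd0).2 fun k hk => ?_⟩
  rw [map_sub, map_smul, Polynomial.coeff_sub, Polynomial.coeff_smul,
    coeff_finSuccEquiv_X_zero_mul_embS]
  split_ifs with hk1
  · exact hk1 ▸ hc
  · simpa using coeff_finSuccEquiv_mem_jacIdealS_of_sigmaAut_sub_smul_mem hd0 hζ hPσ hk hk1
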